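/- Let X be a complex projective variety with an action of a finite group G and let Y = X/G. If the rational cycle class map cl_Q : L_qH_k(X)_Q → H_k(X, Q) is an isomorphism, then the rational cycle class map cl_Q : L_qH_k(Y)_Q → H_k(Y, Q) is an isomorphism. -/
import Mathlib


/-- The submodule of invariants of a linear action of a group `G` on a `ℚ`-vector
space `M`. -/
def fixedSubmodule {G M : Type*} [Group G] [AddCommGroup M] [Module ℚ M]
    (act : G →* (M ≃ₗ[ℚ] M)) : Submodule ℚ M where
  carrier := {x | ∀ g : G, act g x = x}
  add_mem' := by
    intro a b ha hb g
    simp [map_add, ha g, hb g]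
  zero_mem' := by
    intro g
    simp
  smul_mem' := by
    intro c x hx g
    simp [map_smul, hx g]

/-- The data of a complex projective variety `X` with an action of a finite group `G`
and quotient `Y = X/G`, recorded on the level of rational Lawson homology and rational
singular homology in a fixed bidegree `(q, k)`:
* `LX = L_qH_k(X)_ℚ`, `HX = H_k(X, ℚ)`, `LY = L_qH_k(Y)_ℚ`, `HY = H_k(Y, ℚ)`;
* the rational cycle class maps `clX`, `clY`;
* the induced `G`-actions on `LX` and `HX`, with respect to which `clX` is equivariant
  (naturality of the cycle class map);
* the natural identifications `L_qH_k(Y)_ℚ ≅ (L_qH_k(X)_ℚ)^G` and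
  `H_k(Y, ℚ) ≅ H_k(X, ℚ)^G` for the quotient `Y = X/G` by the finite group `G`,
  compatible with the cycle class maps. -/
structure FiniteQuotientCycleData (G : Type*) [Group G] [Finite G]
    (LX HX LY HY : Type*) [AddCommGroup LX] [Module ℚ LX] [AddCommGroup HX] [Module ℚ HX]
    [AddCommGroup LY] [Module ℚ LY] [AddCommGroup HY] [Module ℚ HY] where
  /-- the rational cycle class map `cl_ℚ : L_qH_k(X)_ℚ → H_k(X, ℚ)`. -/
  clX : LX →ₗ[ℚ] HX
  /-- the rational cycle class map `cl_ℚ : L_qH_k(Y)_ℚ → H_k(Y, ℚ)`. -/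
  clY : LY →ₗ[ℚ] HY
  /-- the induced `G`-action on `L_qH_k(X)_ℚ`. -/
  actL : G →* (LX ≃ₗ[ℚ] LX)
  /-- the induced `G`-action on `H_k(X, ℚ)`. -/
  actH : G →* (HX ≃ₗ[ℚ] HX)
  /-- naturality of the cycle class map: `clX` is `G`-equivariant. -/
  cl_equivariant : ∀ (g : G) (x : LX), clX (actL g x) = actH g (clX x)
  /-- `L_qH_k(Y)_ℚ ≅ (L_qH_k(X)_ℚ)^G` for `Y = X/G`. -/
  isoL : LY ≃ₗ[ℚ] fixedSubmodule actL
  /-- `H_k(Y, ℚ) ≅ H_k(X, ℚ)^G` for `Y = X/G`. -/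
  isoH : HY ≃ₗ[ℚ] fixedSubmodule actH
  /-- the identifications are natural with respect to the cycle class maps. -/
  iso_natural : ∀ y : LY, (isoH (clY y) : HX) = clX (isoL y)

/-- Let `X` be a complex projective variety with an action of a finite
group `G` and let `Y = X/G`.  If the rational cycle class map
`cl_ℚ : L_qH_k(X)_ℚ → H_k(X, ℚ)` is an isomorphism, then the rational cycle class map
`cl_ℚ : L_qH_k(Y)_ℚ → H_k(Y, ℚ)` is an isomorphism. -/
theorem cycle_class_iso_descends_to_finite_quotient
    {G : Type*} [Group G] [Finite G]
    {LX HX LY HY : Type*} [AddCommGroup LX] [Module ℚ LX] [AddCommGroup HX] [Module ℚ HX]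
    [AddCommGroup LY] [Module ℚ LY] [AddCommGroup HY] [Module ℚ HY]
    (D : FiniteQuotientCycleData G LX HX LY HY)
    (h : Function.Bijective D.clX) :
    Function.Bijective D.clY := by
  constructor
  · intro y y' hyy'
    apply D.isoL.injective
    apply Subtype.ext
    apply h.1
    rw [← D.iso_natural, ← D.iso_natural, hyy']
  · intro z
    obtain ⟨x, hx⟩ := h.2 ((D.isoH z : HX))
    have hfix : ∀ g : G, D.actL g x = x := by
      intro g
      apply h.1
      rw [D.cl_equivariant, hx, (D.isoH z).2 g]
    refine ⟨D.isoL.symm ⟨x, hfix⟩, D.isoH.injective (Subtype.ext ?_)⟩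
    rw [D.iso_natural]
    simp [hx]
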